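/- arXiv:1911.10889 — 3 statements merged into one kernel-verified Lean document; each statement's English description precedes it below -/
import Mathlib

section
/- Under conditions (Ha) and (Hb), the following are equivalent: (i) r₋(x)/r₊(x) → 0 as x → ∞; (ii) A(x)/m(x) → 1; and either implies ℓ(x)/m(x) → 1, where r₊(x) = ∫ₓ^∞ (1-F(t))/A²(t) dt and r₋(x) = ∫ₓ^∞ F(-t)/A²(t) dt. -/
open MeasureTheory Filter Set Asymptotics Topology
open scoped ENNReal
set_option linter.unusedSectionVars false
set_option linter.unusedVariables false
set_option maxHeartbeats 1000000

/-- Tail of a distribution: `1 - F(x) = P[X > x]`. -/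
noncomputable def tailF (μ : Measure ℝ) (x : ℝ) : ℝ := (μ (Set.Ioi x)).toReal

/-- A function is slowly varying at infinity. -/
def SlowlyVarying (f : ℝ → ℝ) : Prop :=
  (∀ᶠ x in atTop, 0 < f x) ∧
    ∀ c : ℝ, 1 < c → Tendsto (fun x => f (c * x) / f x) atTop (𝓝 1)

/-- Two-sided tail `H(x) = P[|X| > x] = 1 - F(x) + F(-x-0)`. -/
noncomputable def Hf (μ : Measure ℝ) (x : ℝ) : ℝ := (μ {y : ℝ | x < |y|}).toReal

/-- `K(x) = P[X > x] - P[X < -x] = 1 - F(x) - F(-x-0)`. -/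
noncomputable def Kf (μ : Measure ℝ) (x : ℝ) : ℝ :=
  (μ (Set.Ioi x)).toReal - (μ (Set.Iio (-x))).toReal

/-- `A(x) = ∫₀ˣ K(t) dt`. -/
noncomputable def Af (μ : Measure ℝ) (x : ℝ) : ℝ := ∫ t in (0:ℝ)..x, Kf μ t

/-- `ℓ(x) = ∫₀ˣ H(t) dt`. -/
noncomputable def ellH (μ : Measure ℝ) (x : ℝ) : ℝ := ∫ t in (0:ℝ)..x, Hf μ t

/-- `m(x)`, defined by `1/m(x) = ∫ₓ^∞ H(t)/A²(t) dt`. -/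
noncomputable def mF (μ : Measure ℝ) (x : ℝ) : ℝ :=
  (∫ t in Set.Ioi x, Hf μ t / (Af μ t) ^ 2)⁻¹

/-- `r₊(x) = ∫ₓ^∞ (1-F(t))/A²(t) dt`. -/
noncomputable def rPlus (μ : Measure ℝ) (x : ℝ) : ℝ :=
  ∫ t in Set.Ioi x, tailF μ t / (Af μ t) ^ 2

/-- `r₋(x) = ∫ₓ^∞ F(-t)/A²(t) dt`. -/
noncomputable def rMinus (μ : Measure ℝ) (x : ℝ) : ℝ :=
  ∫ t in Set.Ioi x, (μ (Set.Iio (-t))).toReal / (Af μ t) ^ 2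

/-- Condition (Ha): `A(x)/(x H(x)) → ∞`, i.e. positive relative stability. -/
def HaCond (μ : Measure ℝ) : Prop :=
  Tendsto (fun x => Af μ x / (x * Hf μ x)) atTop atTop

/-- Condition (Hb): `∫_{x₀}^∞ H(x)/A²(x) dx < ∞` for some `x₀ > 0`
with `A` positive on `[x₀, ∞)`. -/
def HbCond (μ : Measure ℝ) : Prop :=
  ∃ x₀ : ℝ, 0 < x₀ ∧ (∀ x ≥ x₀, 0 < Af μ x) ∧
    IntegrableOn (fun x => Hf μ x / (Af μ x) ^ 2) (Set.Ioi x₀)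

/-- `X` is arithmetic: `X/h ∈ ℤ` almost surely for some `h > 0`. -/
def IsArith (μ : Measure ℝ) : Prop :=
  ∃ h : ℝ, 0 < h ∧ μ {x : ℝ | ∃ n : ℤ, x = n * h} = 1

/-- Characteristic function `φ(θ) = E[e^{iθX}]`. -/
noncomputable def charF (μ : Measure ℝ) (θ : ℝ) : ℂ :=
  ∫ x, Complex.exp (Complex.I * θ * x) ∂μ

namespace S13
variable {μ : Measure ℝ} [IsProbabilityMeasure μ]

noncomputable def Gf (μ : Measure ℝ) (t : ℝ) : ℝ := (μ (Set.Iio (-t))).toReal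

lemma tail_anti : Antitone (tailF μ) := fun _ _ h =>
  ENNReal.toReal_mono (measure_ne_top μ _) (measure_mono (Ioi_subset_Ioi h))

lemma Gf_anti : Antitone (Gf μ) := fun _ _ h =>
  ENNReal.toReal_mono (measure_ne_top μ _) (measure_mono (Iio_subset_Iio (neg_le_neg h)))

lemma Hf_anti : Antitone (Hf μ) := fun _ _ h =>
  ENNReal.toReal_mono (measure_ne_top μ _) (measure_mono (fun _ hy => lt_of_le_of_lt h hy))

lemma tail_meas : Measurable (tailF μ) := tail_anti.measurable
lemma Gf_meas : Measurable (Gf μ) := Gf_anti.measurable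
lemma Hf_meas : Measurable (Hf μ) := Hf_anti.measurable
lemma Kf_meas : Measurable (Kf μ) := tail_meas.sub Gf_meas

lemma tail_nn (t : ℝ) : 0 ≤ tailF μ t := ENNReal.toReal_nonneg
lemma Gf_nn (t : ℝ) : 0 ≤ Gf μ t := ENNReal.toReal_nonneg
lemma Hf_nn (t : ℝ) : 0 ≤ Hf μ t := ENNReal.toReal_nonneg

lemma meas_le_one (s : Set ℝ) : (μ s).toReal ≤ 1 := by
  calc (μ s).toReal ≤ (1 : ℝ≥0∞).toReal := ENNReal.toReal_mono ENNReal.one_ne_top prob_le_one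
  _ = 1 := by simp

lemma abs_Kf_le (t : ℝ) : |Kf μ t| ≤ 2 := by
  have h1 := meas_le_one (μ := μ) (Set.Ioi t)
  have h2 := meas_le_one (μ := μ) (Set.Iio (-t))
  have h3 : (0:ℝ) ≤ (μ (Set.Ioi t)).toReal := ENNReal.toReal_nonneg
  have h4 : (0:ℝ) ≤ (μ (Set.Iio (-t))).toReal := ENNReal.toReal_nonneg
  rw [Kf, abs_le]; constructor <;> linarith

lemma abs_Hf_le (t : ℝ) : |Hf μ t| ≤ 1 := by
  rw [abs_of_nonneg (Hf_nn t)]; exact meas_le_one _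

lemma abs_Gf_le (t : ℝ) : |Gf μ t| ≤ 1 := by
  rw [abs_of_nonneg (Gf_nn t)]; exact meas_le_one _

lemma Hf_split {t : ℝ} (ht : 0 ≤ t) : Hf μ t = tailF μ t + Gf μ t := by
  have hset : {y : ℝ | t < |y|} = Set.Ioi t ∪ Set.Iio (-t) := by
    ext y
    simp only [mem_setOf_eq, mem_union, mem_Ioi, mem_Iio, lt_abs]
    constructor
    · rintro (h | h); exacts [Or.inl h, Or.inr (by linarith)]
    · rintro (h | h); exacts [Or.inl h, Or.inr (by linarith)]
  have hdisj : Disjoint (Set.Ioi t) (Set.Iio (-t)) := by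
    rw [Set.disjoint_left]; intro y hy hy'
    simp only [mem_Ioi] at hy; simp only [mem_Iio] at hy'; linarith
  rw [Hf, hset, measure_union hdisj measurableSet_Iio,
    ENNReal.toReal_add (measure_ne_top μ _) (measure_ne_top μ _)]
  rfl

lemma Kf_le_Hf {t : ℝ} (ht : 0 ≤ t) : Kf μ t ≤ Hf μ t := by
  have h := Hf_split (μ := μ) ht
  have hK : Kf μ t = tailF μ t - Gf μ t := rfl
  have := Gf_nn (μ := μ) t
  linarith

lemma integrableOn_of_bdd {f : ℝ → ℝ} {s : Set ℝ}
    (hm : AEStronglyMeasurable f (volume.restrict s)) (hs : MeasurableSet s)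
    (hvol : volume s ≠ ⊤) {C : ℝ} (hC : ∀ t ∈ s, |f t| ≤ C) :
    IntegrableOn f s := by
  refine Integrable.mono' (g := fun _ => C) ?_ hm ?_
  · exact integrableOn_const hvol (by simp)
  · exact (ae_restrict_iff' hs).2 (ae_of_all _ fun t ht => by
      simpa [Real.norm_eq_abs] using hC t ht)

lemma intervalIntegrable_of_bdd {f : ℝ → ℝ} (hm : Measurable f) {C : ℝ}
    (hC : ∀ t, |f t| ≤ C) (a b : ℝ) : IntervalIntegrable f volume a b := by
  rw [intervalIntegrable_iff]
  refine integrableOn_of_bdd hm.aestronglyMeasurable.restrict measurableSet_uIoc ?_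
    (fun t _ => hC t)
  rw [Set.uIoc]
  exact (measure_Ioc_lt_top).ne

lemma Kf_ii (a b : ℝ) : IntervalIntegrable (Kf μ) volume a b :=
  intervalIntegrable_of_bdd Kf_meas abs_Kf_le a b
lemma Hf_ii (a b : ℝ) : IntervalIntegrable (Hf μ) volume a b :=
  intervalIntegrable_of_bdd Hf_meas abs_Hf_le a b
lemma Gf_ii (a b : ℝ) : IntervalIntegrable (Gf μ) volume a b :=
  intervalIntegrable_of_bdd Gf_meas abs_Gf_le a b

lemma A_cont : Continuous (Af μ) :=
  intervalIntegral.continuous_primitive (fun a b => Kf_ii a b) 0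


lemma rc_of_anti {f : ℝ → ℝ} (hf : Antitone f) {x : ℝ}
    (h : Tendsto (fun n : ℕ => f (x + 1/(n+1))) atTop (𝓝 (f x))) :
    ContinuousWithinAt f (Ici x) x := by
  rw [ContinuousWithinAt, Metric.tendsto_nhdsWithin_nhds]
  intro ε hε
  obtain ⟨n, hn⟩ := ((Metric.tendsto_nhds.1 h) ε hε).exists
  refine ⟨1/(n+1), by positivity, ?_⟩
  intro t ht hdist
  have h1 : x ≤ t := ht
  have h2 : t ≤ x + 1/(n+1) := by
    rw [Real.dist_eq, abs_lt] at hdist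
    linarith [hdist.1, hdist.2]
  have hl : f (x + 1/(n+1)) ≤ f t := hf h2
  have hr : f t ≤ f x := hf h1
  rw [Real.dist_eq, abs_lt] at hn ⊢
  constructor <;> linarith [hn.1, hn.2]

lemma tail_seq (x : ℝ) :
    Tendsto (fun n : ℕ => tailF μ (x + 1/(n+1))) atTop (𝓝 (tailF μ x)) := by
  have hmono : Monotone (fun n : ℕ => Set.Ioi (x + 1/((n:ℝ)+1))) := by
    intro n m hnm
    apply Ioi_subset_Ioi
    have h1 : ((n:ℝ)+1) ≤ ((m:ℝ)+1) := by exact_mod_cast Nat.succ_le_succ hnm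
    have h2 := one_div_le_one_div_of_le (by positivity : (0:ℝ) < (n:ℝ)+1) h1
    linarith
  have hU : ⋃ n : ℕ, Set.Ioi (x + 1/((n:ℝ)+1)) = Set.Ioi x := by
    ext y
    simp only [mem_iUnion, mem_Ioi]
    constructor
    · rintro ⟨n, hn⟩
      have : (0:ℝ) < 1/((n:ℝ)+1) := by positivity
      linarith
    · intro hy
      obtain ⟨n, hn⟩ := exists_nat_one_div_lt (sub_pos.2 hy)
      exact ⟨n, by linarith⟩
  have h1 := tendsto_measure_iUnion_atTop (μ := μ) hmono
  rw [hU] at h1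
  have h2 := (ENNReal.tendsto_toReal (measure_ne_top μ _)).comp h1
  exact h2

lemma Gf_seq (x : ℝ) :
    Tendsto (fun n : ℕ => Gf μ (x + 1/(n+1))) atTop (𝓝 (Gf μ x)) := by
  have hmono : Monotone (fun n : ℕ => Set.Iio (-(x + 1/((n:ℝ)+1)))) := by
    intro n m hnm
    apply Iio_subset_Iio
    have h1 : ((n:ℝ)+1) ≤ ((m:ℝ)+1) := by exact_mod_cast Nat.succ_le_succ hnm
    have h2 := one_div_le_one_div_of_le (by positivity : (0:ℝ) < (n:ℝ)+1) h1
    linarith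
  have hU : ⋃ n : ℕ, Set.Iio (-(x + 1/((n:ℝ)+1))) = Set.Iio (-x) := by
    ext y
    simp only [mem_iUnion, mem_Iio]
    constructor
    · rintro ⟨n, hn⟩
      have : (0:ℝ) < 1/((n:ℝ)+1) := by positivity
      linarith
    · intro hy
      obtain ⟨n, hn⟩ := exists_nat_one_div_lt (sub_pos.2 (by linarith : y < -x))
      exact ⟨n, by linarith⟩
  have h1 := tendsto_measure_iUnion_atTop (μ := μ) hmono
  rw [hU] at h1
  have h2 := (ENNReal.tendsto_toReal (measure_ne_top μ _)).comp h1
  exact h2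

lemma tail_rc (x : ℝ) : ContinuousWithinAt (tailF μ) (Ici x) x :=
  rc_of_anti tail_anti (tail_seq x)
lemma Gf_rc (x : ℝ) : ContinuousWithinAt (Gf μ) (Ici x) x :=
  rc_of_anti Gf_anti (Gf_seq x)
lemma Kf_rc (x : ℝ) : ContinuousWithinAt (Kf μ) (Ici x) x :=
  (tail_rc x).sub (Gf_rc x)

lemma smaf {f : ℝ → ℝ} (hm : Measurable f) (l : Filter ℝ) :
    StronglyMeasurableAtFilter f l volume :=
  ⟨univ, univ_mem, by rw [Measure.restrict_univ]; exact hm.aestronglyMeasurable⟩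

lemma A_deriv (x : ℝ) : HasDerivWithinAt (Af μ) (Kf μ x) (Ici x) x :=
  intervalIntegral.integral_hasDerivWithinAt_right (Kf_ii 0 x)
    (smaf Kf_meas _) ((Kf_rc x).mono Ioi_subset_Ici_self)

lemma integral_Ioi_split {f : ℝ → ℝ} {a b : ℝ} (hab : a ≤ b)
    (hf : IntegrableOn f (Ioi a)) :
    ∫ t in Ioi b, f t = (∫ t in Ioi a, f t) - ∫ t in a..b, f t := by
  rw [intervalIntegral.integral_of_le hab]
  have h := setIntegral_union (Ioc_disjoint_Ioi le_rfl) measurableSet_Ioi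
    (hf.mono_set Ioc_subset_Ioi_self) (hf.mono_set (Ioi_subset_Ioi hab))
  rw [Ioc_union_Ioi_eq_Ioi hab] at h
  linarith

lemma ell_decomp {x : ℝ} (hx : 0 ≤ x) :
    ellH μ x = Af μ x + 2 * ∫ t in (0:ℝ)..x, Gf μ t := by
  have h1 : ∀ t ∈ uIcc (0:ℝ) x, Hf μ t = Kf μ t + 2 * Gf μ t := by
    intro t ht
    rw [uIcc_of_le hx] at ht
    have h2 := Hf_split (μ := μ) ht.1
    have hK : Kf μ t = tailF μ t - Gf μ t := rfl
    linarith
  rw [ellH, intervalIntegral.integral_congr h1,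
    intervalIntegral.integral_add (Kf_ii 0 x) ((Gf_ii 0 x).const_mul 2),
    intervalIntegral.integral_const_mul]
  rfl


noncomputable def Rf (μ : Measure ℝ) (x : ℝ) : ℝ :=
  ∫ t in Set.Ioi x, Hf μ t / (Af μ t) ^ 2
noncomputable def rPlus' (μ : Measure ℝ) (x : ℝ) : ℝ :=
  ∫ t in Set.Ioi x, tailF μ t / (Af μ t) ^ 2
noncomputable def rMinus' (μ : Measure ℝ) (x : ℝ) : ℝ :=
  ∫ t in Set.Ioi x, Gf μ t / (Af μ t) ^ 2

section Main

variable {x₀ : ℝ}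

lemma quot_meas {f : ℝ → ℝ} (hf : Measurable f) :
    Measurable (fun t => f t / (Af μ t) ^ 2) :=
  hf.div (((A_cont (μ := μ)).measurable).pow_const 2)

lemma int_quot (hx₀ : 0 < x₀) (hApos : ∀ x ≥ x₀, 0 < Af μ x)
    (hHint : IntegrableOn (fun x => Hf μ x / (Af μ x) ^ 2) (Set.Ioi x₀))
    {f : ℝ → ℝ} (hfm : Measurable f)
    (hle : ∀ t, x₀ ≤ t → 0 ≤ f t ∧ f t ≤ Hf μ t) {x : ℝ} (hx : x₀ ≤ x) :
    IntegrableOn (fun t => f t / (Af μ t) ^ 2) (Ioi x) := by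
  refine Integrable.mono' (hHint.mono_set (Ioi_subset_Ioi hx))
    ((quot_meas hfm).aestronglyMeasurable.restrict) ?_
  refine (ae_restrict_iff' measurableSet_Ioi).2 (ae_of_all _ fun t ht => ?_)
  have htx : x₀ ≤ t := le_trans hx (le_of_lt ht)
  obtain ⟨h0, h1⟩ := hle t htx
  rw [Real.norm_eq_abs, abs_of_nonneg (div_nonneg h0 (sq_nonneg _))]
  have hA := hApos t htx
  gcongr

lemma int_H (hHint : IntegrableOn (fun x => Hf μ x / (Af μ x) ^ 2) (Set.Ioi x₀))
    {x : ℝ} (hx : x₀ ≤ x) :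
    IntegrableOn (fun t => Hf μ t / (Af μ t) ^ 2) (Ioi x) :=
  hHint.mono_set (Ioi_subset_Ioi hx)

lemma int_tail (hx₀ : 0 < x₀) (hApos : ∀ x ≥ x₀, 0 < Af μ x)
    (hHint : IntegrableOn (fun x => Hf μ x / (Af μ x) ^ 2) (Set.Ioi x₀))
    {x : ℝ} (hx : x₀ ≤ x) :
    IntegrableOn (fun t => tailF μ t / (Af μ t) ^ 2) (Ioi x) := by
  refine int_quot hx₀ hApos hHint tail_meas (fun t ht => ⟨tail_nn t, ?_⟩) hx
  have h0 : (0:ℝ) ≤ t := le_trans hx₀.le ht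
  rw [Hf_split h0]
  linarith [Gf_nn (μ := μ) t]

lemma int_G (hx₀ : 0 < x₀) (hApos : ∀ x ≥ x₀, 0 < Af μ x)
    (hHint : IntegrableOn (fun x => Hf μ x / (Af μ x) ^ 2) (Set.Ioi x₀))
    {x : ℝ} (hx : x₀ ≤ x) :
    IntegrableOn (fun t => Gf μ t / (Af μ t) ^ 2) (Ioi x) := by
  refine int_quot hx₀ hApos hHint Gf_meas (fun t ht => ⟨Gf_nn t, ?_⟩) hx
  have h0 : (0:ℝ) ≤ t := le_trans hx₀.le ht
  rw [Hf_split h0]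
  linarith [tail_nn (μ := μ) t]

lemma KdivA_eq : (fun t => Kf μ t / (Af μ t) ^ 2)
    = fun t => tailF μ t / (Af μ t) ^ 2 - Gf μ t / (Af μ t) ^ 2 :=
  funext fun t => by rw [← sub_div]; rfl

lemma int_K (hx₀ : 0 < x₀) (hApos : ∀ x ≥ x₀, 0 < Af μ x)
    (hHint : IntegrableOn (fun x => Hf μ x / (Af μ x) ^ 2) (Set.Ioi x₀))
    {x : ℝ} (hx : x₀ ≤ x) :
    IntegrableOn (fun t => Kf μ t / (Af μ t) ^ 2) (Ioi x) := by
  rw [KdivA_eq]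
  exact (int_tail hx₀ hApos hHint hx).sub (int_G hx₀ hApos hHint hx)

lemma Rf_tendsto (hHint : IntegrableOn (fun x => Hf μ x / (Af μ x) ^ 2) (Set.Ioi x₀)) :
    Tendsto (Rf μ) atTop (𝓝 0) := by
  have h1 := intervalIntegral_tendsto_integral_Ioi x₀ hHint tendsto_id
  have h2 : ∀ᶠ x in atTop,
      Rf μ x₀ - (∫ t in x₀..x, Hf μ t / (Af μ t) ^ 2) = Rf μ x :=
    (eventually_ge_atTop x₀).mono fun x hx => (integral_Ioi_split hx hHint).symm
  have h3 : Tendsto (fun x => Rf μ x₀ - ∫ t in x₀..x, Hf μ t / (Af μ t) ^ 2)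
      atTop (𝓝 (Rf μ x₀ - Rf μ x₀)) := tendsto_const_nhds.sub h1
  rw [sub_self] at h3
  exact h3.congr' h2


lemma A_unbdd (hmean : ∫⁻ x, ENNReal.ofReal |x| ∂μ = ⊤)
    (hx₀ : 0 < x₀) (hApos : ∀ x ≥ x₀, 0 < Af μ x)
    (hHint : IntegrableOn (fun x => Hf μ x / (Af μ x) ^ 2) (Set.Ioi x₀))
    (M c : ℝ) : ∃ z, c ≤ z ∧ M ≤ Af μ z := by
  by_contra hcon
  push_neg at hcon
  set c' := max c x₀ with hc'
  obtain ⟨M₂, hM₂⟩ := (isCompact_Icc (a := x₀) (b := c')).exists_bound_of_continuousOn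
    (A_cont (μ := μ)).continuousOn
  set B := max M M₂ with hB
  have hBb : ∀ t, x₀ ≤ t → Af μ t ≤ B := by
    intro t ht
    rcases le_total t c' with h | h
    · have := hM₂ t ⟨ht, h⟩
      rw [Real.norm_eq_abs] at this
      have := (abs_le.1 this).2
      exact le_trans this (le_max_right _ _)
    · have : c ≤ t := le_trans (le_max_left _ _) h
      exact le_trans (hcon t this).le (le_max_left _ _)
  have hBpos : 0 < B := lt_of_lt_of_le (hApos x₀ le_rfl) (hBb x₀ le_rfl)
  -- H/B² integrable on Ioi x₀
  have hHB : IntegrableOn (fun t => Hf μ t / B ^ 2) (Ioi x₀) := by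
    refine Integrable.mono' hHint
      ((Hf_meas.div_const _).aestronglyMeasurable.restrict) ?_
    refine (ae_restrict_iff' measurableSet_Ioi).2 (ae_of_all _ fun t ht => ?_)
    rw [Real.norm_eq_abs, abs_of_nonneg (div_nonneg (Hf_nn t) (sq_nonneg _))]
    have hA := hApos t ht.le
    have hAB := hBb t ht.le
    gcongr
    exact Hf_nn t
  have hH1 : IntegrableOn (Hf μ) (Ioi x₀) := by
    have h := hHB.const_mul (B ^ 2)
    refine h.congr ?_
    refine ae_of_all _ fun t => ?_
    field_simp
  -- layercake
  have layer : ∫⁻ t in Ioi (0:ℝ), μ {a : ℝ | t < |a|} = ⊤ := by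
    rw [← lintegral_eq_lintegral_meas_lt μ (ae_of_all _ abs_nonneg)
      measurable_abs.aemeasurable]
    exact hmean
  have hsplit : Set.Ioi (0:ℝ) = Set.Ioc 0 x₀ ∪ Set.Ioi x₀ :=
    (Ioc_union_Ioi_eq_Ioi hx₀.le).symm
  rw [hsplit, lintegral_union measurableSet_Ioi (Ioc_disjoint_Ioi le_rfl)] at layer
  have h1 : ∫⁻ t in Ioc (0:ℝ) x₀, μ {a : ℝ | t < |a|} ≠ ⊤ := by
    have hb : ∫⁻ t in Ioc (0:ℝ) x₀, μ {a : ℝ | t < |a|}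
        ≤ ∫⁻ _ in Ioc (0:ℝ) x₀, 1 := lintegral_mono fun t => prob_le_one
    rw [setLIntegral_one] at hb
    exact ne_top_of_le_ne_top (by simp [Real.volume_Ioc]) hb
  have h2 : ∫⁻ t in Ioi x₀, μ {a : ℝ | t < |a|} ≠ ⊤ := by
    have heq : ∫⁻ t in Ioi x₀, μ {a : ℝ | t < |a|}
        = ∫⁻ t in Ioi x₀, ENNReal.ofReal (Hf μ t) := by
      refine lintegral_congr fun t => ?_
      rw [Hf, ENNReal.ofReal_toReal (measure_ne_top μ _)]
    rw [heq]
    exact hH1.lintegral_lt_top.ne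
  rw [ENNReal.add_eq_top] at layer
  tauto

lemma invA_eq (hmean : ∫⁻ x, ENNReal.ofReal |x| ∂μ = ⊤)
    (hx₀ : 0 < x₀) (hApos : ∀ x ≥ x₀, 0 < Af μ x)
    (hHint : IntegrableOn (fun x => Hf μ x / (Af μ x) ^ 2) (Set.Ioi x₀))
    {x : ℝ} (hx : x₀ ≤ x) :
    (∫ t in Ioi x, Kf μ t / (Af μ t) ^ 2) = (Af μ x)⁻¹ := by
  choose z hz1 hz2 using fun n : ℕ =>
    A_unbdd hmean hx₀ hApos hHint (n : ℝ) (max x₀ (max x (n : ℝ)))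
  have hzx₀ : ∀ n, x₀ ≤ z n := fun n => le_trans (le_max_left _ _) (hz1 n)
  have hzx : ∀ n, x ≤ z n := fun n =>
    le_trans (le_trans (le_max_left _ _) (le_max_right _ _)) (hz1 n)
  have hz_top : Tendsto z atTop atTop :=
    tendsto_atTop_mono
      (fun n => le_trans (le_trans (le_max_right _ _) (le_max_right _ _)) (hz1 n))
      tendsto_natCast_atTop_atTop
  have key : ∀ n : ℕ, (∫ t in x..z n, Kf μ t / (Af μ t) ^ 2)
      = (Af μ x)⁻¹ - (Af μ (z n))⁻¹ := by
    intro n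
    have hcont : ContinuousOn (fun t => -(Af μ t)⁻¹) (Icc x (z n)) := by
      refine ContinuousOn.neg ?_
      refine ContinuousOn.inv₀ (A_cont (μ := μ)).continuousOn fun t ht => ?_
      exact (hApos t (le_trans hx ht.1)).ne'
    have hderiv : ∀ t ∈ Ioo x (z n),
        HasDerivWithinAt (fun s => -(Af μ s)⁻¹) (Kf μ t / (Af μ t) ^ 2) (Ioi t) t := by
      intro t ht
      have hAne : Af μ t ≠ 0 := (hApos t (le_trans hx ht.1.le)).ne'
      have h1 := (((A_deriv (μ := μ) t).mono Ioi_subset_Ici_self).inv hAne).neg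
      refine h1.congr_deriv ?_
      ring
    have hint : IntervalIntegrable (fun t => Kf μ t / (Af μ t) ^ 2) volume x (z n) := by
      rw [intervalIntegrable_iff_integrableOn_Ioc_of_le (hzx n)]
      exact (int_K hx₀ hApos hHint hx).mono_set Ioc_subset_Ioi_self
    have h := intervalIntegral.integral_eq_sub_of_hasDeriv_right_of_le (hzx n)
      hcont hderiv hint
    rw [h]; ring
  have t1 : Tendsto (fun n => ∫ t in x..z n, Kf μ t / (Af μ t) ^ 2) atTop
      (𝓝 (∫ t in Ioi x, Kf μ t / (Af μ t) ^ 2)) :=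
    intervalIntegral_tendsto_integral_Ioi x (int_K hx₀ hApos hHint hx) hz_top
  have hAz : Tendsto (fun n => Af μ (z n)) atTop atTop :=
    tendsto_atTop_mono hz2 tendsto_natCast_atTop_atTop
  have t2 : Tendsto (fun n => (Af μ x)⁻¹ - (Af μ (z n))⁻¹) atTop
      (𝓝 ((Af μ x)⁻¹ - 0)) := tendsto_const_nhds.sub hAz.inv_tendsto_atTop
  rw [sub_zero] at t2
  exact tendsto_nhds_unique (t1.congr key) t2


lemma rMinus_nn (x : ℝ) : 0 ≤ rMinus' μ x :=
  setIntegral_nonneg measurableSet_Ioi fun t _ => div_nonneg (Gf_nn t) (sq_nonneg _)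

lemma rsub (hmean : ∫⁻ x, ENNReal.ofReal |x| ∂μ = ⊤)
    (hx₀ : 0 < x₀) (hApos : ∀ x ≥ x₀, 0 < Af μ x)
    (hHint : IntegrableOn (fun x => Hf μ x / (Af μ x) ^ 2) (Set.Ioi x₀))
    {x : ℝ} (hx : x₀ ≤ x) :
    rPlus' μ x - rMinus' μ x = (Af μ x)⁻¹ := by
  rw [← invA_eq hmean hx₀ hApos hHint hx, rPlus', rMinus',
    ← integral_sub (int_tail hx₀ hApos hHint hx) (int_G hx₀ hApos hHint hx)]
  refine setIntegral_congr_fun measurableSet_Ioi fun t _ => ?_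
  exact (congrFun (KdivA_eq (μ := μ)) t).symm

lemma Rsum (hx₀ : 0 < x₀) (hApos : ∀ x ≥ x₀, 0 < Af μ x)
    (hHint : IntegrableOn (fun x => Hf μ x / (Af μ x) ^ 2) (Set.Ioi x₀))
    {x : ℝ} (hx : x₀ ≤ x) :
    Rf μ x = rPlus' μ x + rMinus' μ x := by
  rw [rPlus', rMinus', ← integral_add (int_tail hx₀ hApos hHint hx) (int_G hx₀ hApos hHint hx), Rf]
  refine setIntegral_congr_fun measurableSet_Ioi fun t ht => ?_
  have h0 : (0:ℝ) ≤ t := le_trans hx₀.le (le_trans hx ht.le)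
  rw [Hf_split h0, add_div]

lemma A_top (hmean : ∫⁻ x, ENNReal.ofReal |x| ∂μ = ⊤)
    (hx₀ : 0 < x₀) (hApos : ∀ x ≥ x₀, 0 < Af μ x)
    (hHint : IntegrableOn (fun x => Hf μ x / (Af μ x) ^ 2) (Set.Ioi x₀)) :
    Tendsto (Af μ) atTop atTop := by
  have hb : ∀ᶠ x in atTop, (Af μ x)⁻¹ ≤ Rf μ x := by
    refine (eventually_ge_atTop x₀).mono fun x hx => ?_
    rw [← invA_eq hmean hx₀ hApos hHint hx]
    refine setIntegral_mono_on (int_K hx₀ hApos hHint hx) (int_H hHint hx)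
      measurableSet_Ioi fun t ht => ?_
    have h0 : (0:ℝ) ≤ t := le_trans hx₀.le (le_trans hx ht.le)
    have hA := hApos t (le_trans hx ht.le)
    have hK := Kf_le_Hf (μ := μ) h0
    gcongr
  have h0 : ∀ᶠ x in atTop, 0 < (Af μ x)⁻¹ :=
    (eventually_ge_atTop x₀).mono fun x hx => inv_pos.2 (hApos x hx)
  have hinv : Tendsto (fun x => (Af μ x)⁻¹) atTop (𝓝 0) :=
    tendsto_of_tendsto_of_tendsto_of_le_of_le' tendsto_const_nhds
      (Rf_tendsto hHint) (h0.mono fun x hx => hx.le) hb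
  have hinv' : Tendsto (fun x => (Af μ x)⁻¹) atTop (𝓝[>] 0) :=
    tendsto_nhdsWithin_iff.2 ⟨hinv, h0⟩
  have h2 := hinv'.inv_tendsto_nhdsGT_zero
  refine h2.congr fun x => ?_
  simp


noncomputable def Pf (μ : Measure ℝ) (x₁ t : ℝ) : ℝ :=
  rMinus' μ x₁ - ∫ s in x₁..t, Gf μ s / (Af μ s) ^ 2

lemma Pf_eq (hx₀ : 0 < x₀) (hApos : ∀ x ≥ x₀, 0 < Af μ x)
    (hHint : IntegrableOn (fun x => Hf μ x / (Af μ x) ^ 2) (Set.Ioi x₀))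
    {x₁ t : ℝ} (hx₁ : x₀ ≤ x₁) (ht : x₁ ≤ t) : Pf μ x₁ t = rMinus' μ t := by
  have h := integral_Ioi_split ht (int_G hx₀ hApos hHint hx₁)
  simp only [Pf, rMinus']
  rw [h]

lemma g_ii (hx₀ : 0 < x₀) (hApos : ∀ x ≥ x₀, 0 < Af μ x)
    (hHint : IntegrableOn (fun x => Hf μ x / (Af μ x) ^ 2) (Set.Ioi x₀))
    {x₁ b : ℝ} (hx₁ : x₀ ≤ x₁) (hb : x₁ ≤ b) :
    IntervalIntegrable (fun s => Gf μ s / (Af μ s) ^ 2) volume x₁ b := by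
  rw [intervalIntegrable_iff_integrableOn_Ioc_of_le hb]
  exact (int_G hx₀ hApos hHint hx₁).mono_set Ioc_subset_Ioi_self

lemma Pf_contOn (hx₀ : 0 < x₀) (hApos : ∀ x ≥ x₀, 0 < Af μ x)
    (hHint : IntegrableOn (fun x => Hf μ x / (Af μ x) ^ 2) (Set.Ioi x₀))
    {x₁ b : ℝ} (hx₁ : x₀ ≤ x₁) (hb : x₁ ≤ b) :
    ContinuousOn (Pf μ x₁) (Icc x₁ b) := by
  have h := intervalIntegral.continuousOn_primitive_interval'
    (g_ii hx₀ hApos hHint hx₁ hb) left_mem_uIcc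
  have h2 : ContinuousOn (Pf μ x₁) (Set.uIcc x₁ b) := continuousOn_const.sub h
  rwa [uIcc_of_le hb] at h2

lemma Pf_deriv (hx₀ : 0 < x₀) (hApos : ∀ x ≥ x₀, 0 < Af μ x)
    (hHint : IntegrableOn (fun x => Hf μ x / (Af μ x) ^ 2) (Set.Ioi x₀))
    {x₁ t : ℝ} (hx₁ : x₀ ≤ x₁) (ht : x₁ < t) :
    HasDerivWithinAt (Pf μ x₁) (-(Gf μ t / (Af μ t) ^ 2)) (Ici t) t := by
  have hA := hApos t (le_trans hx₁ ht.le)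
  have hcw : ContinuousWithinAt (fun s => Gf μ s / (Af μ s) ^ 2) (Ioi t) t := by
    refine ContinuousWithinAt.div ((Gf_rc t).mono Ioi_subset_Ici_self) ?_ ?_
    · exact (((A_cont (μ := μ)).pow 2).continuousAt).continuousWithinAt
    · exact pow_ne_zero 2 hA.ne'
  have hprim := intervalIntegral.integral_hasDerivWithinAt_right
    (s := Set.Ici t) (t := Set.Ioi t)
    (g_ii hx₀ hApos hHint hx₁ ht.le) (smaf (quot_meas Gf_meas) _) hcw
  exact hprim.const_sub _

lemma main_ii (hx₀ : 0 < x₀) (hApos : ∀ x ≥ x₀, 0 < Af μ x)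
    (hHint : IntegrableOn (fun x => Hf μ x / (Af μ x) ^ 2) (Set.Ioi x₀))
    {x₁ x : ℝ} (hx₁ : x₀ ≤ x₁) (hx : x₁ ≤ x) :
    IntervalIntegrable (fun t => 2 * Af μ t * Kf μ t * Pf μ x₁ t) volume x₁ x := by
  have hPc := Pf_contOn hx₀ hApos hHint hx₁ hx
  obtain ⟨Cp, hCp⟩ := (isCompact_Icc).exists_bound_of_continuousOn hPc
  obtain ⟨Ca, hCa⟩ := (isCompact_Icc (a := x₁) (b := x)).exists_bound_of_continuousOn
    (A_cont (μ := μ)).continuousOn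
  rw [intervalIntegrable_iff_integrableOn_Ioc_of_le hx]
  refine integrableOn_of_bdd (C := 2 * Ca * 2 * Cp) ?_ measurableSet_Ioc
    (by simp [Real.volume_Ioc]) ?_
  · have h1 : AEStronglyMeasurable (Pf μ x₁) (volume.restrict (Ioc x₁ x)) :=
      (hPc.mono Ioc_subset_Icc_self).aestronglyMeasurable measurableSet_Ioc
    have h2 : AEStronglyMeasurable (fun t => 2 * Af μ t * Kf μ t)
        (volume.restrict (Ioc x₁ x)) :=
      (((continuous_const.mul (A_cont (μ := μ))).measurable.mul Kf_meas)).aestronglyMeasurable.restrict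
    exact h2.mul h1
  · intro t ht
    have htI : t ∈ Icc x₁ x := Ioc_subset_Icc_self ht
    have h1 := hCa t htI
    have h2 := hCp t htI
    rw [Real.norm_eq_abs] at h1 h2
    have h3 := abs_Kf_le (μ := μ) t
    have e : |2 * Af μ t * Kf μ t * Pf μ x₁ t|
        = 2 * |Af μ t| * |Kf μ t| * |Pf μ x₁ t| := by
      rw [abs_mul, abs_mul, abs_mul]
      norm_num
    rw [e]
    have hb1 : |Af μ t| * |Kf μ t| ≤ Ca * 2 :=
      mul_le_mul h1 h3 (abs_nonneg _) (le_trans (abs_nonneg _) h1)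
    have hb2 : (|Af μ t| * |Kf μ t|) * |Pf μ x₁ t| ≤ (Ca * 2) * Cp :=
      mul_le_mul hb1 h2 (abs_nonneg _)
        (mul_nonneg (le_trans (abs_nonneg _) h1) (by norm_num))
    calc 2 * |Af μ t| * |Kf μ t| * |Pf μ x₁ t|
        = 2 * ((|Af μ t| * |Kf μ t|) * |Pf μ x₁ t|) := by ring
    _ ≤ 2 * ((Ca * 2) * Cp) := by linarith
    _ = 2 * Ca * 2 * Cp := by ring

lemma ibp (hx₀ : 0 < x₀) (hApos : ∀ x ≥ x₀, 0 < Af μ x)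
    (hHint : IntegrableOn (fun x => Hf μ x / (Af μ x) ^ 2) (Set.Ioi x₀))
    {x₁ x : ℝ} (hx₁ : x₀ ≤ x₁) (hx : x₁ ≤ x) :
    ∫ t in x₁..x, (2 * Af μ t * Kf μ t * Pf μ x₁ t - Gf μ t)
      = (Af μ x) ^ 2 * Pf μ x₁ x - (Af μ x₁) ^ 2 * Pf μ x₁ x₁ := by
  refine intervalIntegral.integral_eq_sub_of_hasDeriv_right_of_le
    (f := fun y => (Af μ y) ^ 2 * Pf μ x₁ y)
    (f' := fun t => 2 * Af μ t * Kf μ t * Pf μ x₁ t - Gf μ t) hx ?_ ?_ ?_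
  · exact (((A_cont (μ := μ)).pow 2).continuousOn).mul (Pf_contOn hx₀ hApos hHint hx₁ hx)
  · intro t ht
    have hA := hApos t (le_trans hx₁ ht.1.le)
    have hA2 : HasDerivWithinAt (fun s => (Af μ s) ^ 2) (2 * Af μ t * Kf μ t) (Ioi t) t := by
      have h := ((A_deriv (μ := μ) t).mono Ioi_subset_Ici_self).pow 2
      refine h.congr_deriv ?_
      simp
    have hPd := (Pf_deriv hx₀ hApos hHint hx₁ ht.1).mono Ioi_subset_Ici_self
    have h := hA2.mul hPd
    have hval : ((fun t => 2 * Af μ t * Kf μ t * Pf μ x₁ t - Gf μ t) t)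
        = 2 * Af μ t * Kf μ t * Pf μ x₁ t + (Af μ t) ^ 2 * -(Gf μ t / (Af μ t) ^ 2) := by
      show 2 * Af μ t * Kf μ t * Pf μ x₁ t - Gf μ t = _
      field_simp
      ring
    rw [show 2 * Af μ t * Kf μ t * Pf μ x₁ t - Gf μ t = _ from hval]
    exact h
  · exact (main_ii hx₀ hApos hHint hx₁ hx).sub (Gf_ii (μ := μ) x₁ x)


lemma DA_tendsto (hmean : ∫⁻ x, ENNReal.ofReal |x| ∂μ = ⊤)
    (hx₀ : 0 < x₀) (hApos : ∀ x ≥ x₀, 0 < Af μ x)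
    (hHint : IntegrableOn (fun x => Hf μ x / (Af μ x) ^ 2) (Set.Ioi x₀))
    (hu : Tendsto (fun x => Af μ x * rMinus' μ x) atTop (𝓝 0)) :
    Tendsto (fun x => (∫ t in (0:ℝ)..x, Gf μ t) / Af μ x) atTop (𝓝 0) := by
  have hAt := A_top hmean hx₀ hApos hHint
  rw [NormedAddCommGroup.tendsto_nhds_zero]
  intro ε₀ hε₀
  set ε := min (ε₀/16) (1/8) with hεdef
  have hεpos : 0 < ε := lt_min (by linarith) (by norm_num)
  have hε8 : ε ≤ 1/8 := min_le_right _ _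
  have hε16 : ε ≤ ε₀/16 := min_le_left _ _
  obtain ⟨x₁', hx₁'⟩ :=
    eventually_atTop.1 ((NormedAddCommGroup.tendsto_nhds_zero.1 hu) ε hεpos)
  set x₁ := max x₁' x₀ with hx₁def
  have hx₁0 : x₀ ≤ x₁ := le_max_right _ _
  have hx₁pos : (0:ℝ) < x₁ := lt_of_lt_of_le hx₀ hx₁0
  have hux : ∀ t, x₁ ≤ t → Af μ t * rMinus' μ t ≤ ε := by
    intro t ht
    have h := hx₁' t (le_trans (le_max_left _ _) ht)
    rw [Real.norm_eq_abs] at h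
    exact le_trans (le_abs_self _) h.le
  set C := (∫ t in (0:ℝ)..x₁, Gf μ t) + (Af μ x₁) ^ 2 * Pf μ x₁ x₁ with hCdef
  have hDnn : ∀ x, 0 ≤ x → 0 ≤ ∫ t in (0:ℝ)..x, Gf μ t := fun x hx =>
    intervalIntegral.integral_nonneg hx (fun t _ => Gf_nn t)
  have hPx₁ : Pf μ x₁ x₁ = rMinus' μ x₁ := Pf_eq hx₀ hApos hHint hx₁0 le_rfl
  have hCnn : 0 ≤ C := by
    rw [hCdef, hPx₁]
    have h1 := rMinus_nn (μ := μ) x₁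
    have h2 := hDnn x₁ hx₁pos.le
    nlinarith [sq_nonneg (Af μ x₁)]
  have key : ∀ x, x₁ ≤ x → (∫ t in (0:ℝ)..x, Gf μ t) ≤ 2*C + 4*ε*Af μ x := by
    intro x hx
    have hxpos : (0:ℝ) ≤ x := le_trans hx₁pos.le hx
    have hibp := ibp hx₀ hApos hHint hx₁0 hx
    have hsub := intervalIntegral.integral_sub (main_ii hx₀ hApos hHint hx₁0 hx) (Gf_ii (μ := μ) x₁ x)
    have hmono : (∫ t in x₁..x, 2 * Af μ t * Kf μ t * Pf μ x₁ t)
        ≤ ∫ t in x₁..x, 2*ε*Hf μ t := by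
      refine intervalIntegral.integral_mono_on hx (main_ii hx₀ hApos hHint hx₁0 hx)
        ((Hf_ii (μ := μ) x₁ x).const_mul (2*ε)) ?_
      intro t ht
      rw [Pf_eq hx₀ hApos hHint hx₁0 ht.1]
      have hA := hApos t (le_trans hx₁0 ht.1)
      have hrm := rMinus_nn (μ := μ) t
      have hK := Kf_le_Hf (μ := μ) (le_trans hx₁pos.le ht.1)
      have hH := Hf_nn (μ := μ) t
      have har := hux t ht.1
      have harm : 0 ≤ Af μ t * rMinus' μ t := mul_nonneg hA.le hrm
      calc 2 * Af μ t * Kf μ t * rMinus' μ t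
          = 2*((Af μ t * rMinus' μ t) * Kf μ t) := by ring
      _ ≤ 2*((Af μ t * rMinus' μ t) * Hf μ t) := by nlinarith
      _ ≤ 2*(ε * Hf μ t) := by nlinarith
      _ = 2*ε*Hf μ t := by ring
    have hH_int : (∫ t in x₁..x, 2*ε*Hf μ t) = 2*ε*(ellH μ x - ellH μ x₁) := by
      rw [intervalIntegral.integral_const_mul]
      have hadj := intervalIntegral.integral_add_adjacent_intervals (Hf_ii (μ := μ) 0 x₁) (Hf_ii (μ := μ) x₁ x)
      have h5 : (∫ t in x₁..x, Hf μ t) = ellH μ x - ellH μ x₁ := by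
        rw [ellH, ellH]; linarith
      rw [h5]
    have hell := ell_decomp (μ := μ) hxpos
    have hellx₁nn : 0 ≤ ellH μ x₁ :=
      intervalIntegral.integral_nonneg hx₁pos.le (fun t _ => Hf_nn t)
    have hPhix : 0 ≤ (Af μ x) ^ 2 * Pf μ x₁ x := by
      rw [Pf_eq hx₀ hApos hHint hx₁0 hx]
      exact mul_nonneg (sq_nonneg _) (rMinus_nn x)
    have hD : (∫ t in (0:ℝ)..x, Gf μ t)
        = (∫ t in (0:ℝ)..x₁, Gf μ t) + ∫ t in x₁..x, Gf μ t :=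
      (intervalIntegral.integral_add_adjacent_intervals (Gf_ii (μ := μ) 0 x₁) (Gf_ii (μ := μ) x₁ x)).symm
    have hGle : (∫ t in x₁..x, Gf μ t)
        ≤ (Af μ x₁) ^ 2 * Pf μ x₁ x₁ + 2*ε*(ellH μ x - ellH μ x₁) := by
      rw [hsub] at hibp
      linarith [hmono, hPhix, hH_int.symm.le, hH_int.le]
    nlinarith [hGle, hD, hell, hDnn x hxpos,
      mul_nonneg hεpos.le hellx₁nn,
      mul_nonneg (by linarith : (0:ℝ) ≤ 1/8 - ε) (hDnn x hxpos)]
  have hC2 : ∀ᶠ x in atTop, 2*C / Af μ x < ε₀/2 := by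
    refine (hAt.eventually_gt_atTop (max 1 (8*C/ε₀))).mono fun x hx => ?_
    have hA1 : (1:ℝ) < Af μ x := lt_of_le_of_lt (le_max_left _ _) hx
    have hA0 : (0:ℝ) < Af μ x := by linarith
    rw [div_lt_iff₀ hA0]
    have h8 : 8*C/ε₀ < Af μ x := lt_of_le_of_lt (le_max_right _ _) hx
    rw [div_lt_iff₀ hε₀] at h8
    nlinarith
  filter_upwards [eventually_ge_atTop x₁, hC2, hAt.eventually_gt_atTop 0] with x hx hx2 hA0
  have hkey := key x hx
  have hD0 := hDnn x (le_trans hx₁pos.le hx)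
  rw [Real.norm_eq_abs, abs_of_nonneg (div_nonneg hD0 hA0.le), div_lt_iff₀ hA0]
  rw [div_lt_iff₀ hA0] at hx2
  nlinarith [mul_nonneg (by linarith : (0:ℝ) ≤ ε₀/16 - ε) hA0.le]

end Main
end S13

/-- Under (Ha) and (Hb): `r₋/r₊ → 0` iff `A/m → 1`, and either implies `ℓ/m → 1`. -/
theorem stmt13 (μ : Measure ℝ) [IsProbabilityMeasure μ]
    (hmean : ∫⁻ x, ENNReal.ofReal |x| ∂μ = ⊤)
    (hHa : HaCond μ) (hHb : HbCond μ) :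
    (Tendsto (fun x => rMinus μ x / rPlus μ x) atTop (𝓝 0) ↔
      Tendsto (fun x => Af μ x / mF μ x) atTop (𝓝 1)) ∧
    (Tendsto (fun x => Af μ x / mF μ x) atTop (𝓝 1) →
      Tendsto (fun x => ellH μ x / mF μ x) atTop (𝓝 1)) := by
  obtain ⟨x₀, hx₀, hApos, hHint⟩ := hHb
  clear hHa
  have hdiv : ∀ x, Af μ x / mF μ x = Af μ x * S13.Rf μ x := fun x => by
    show Af μ x / (S13.Rf μ x)⁻¹ = _
    rw [div_eq_mul_inv, inv_inv]
  have hldiv : ∀ x, ellH μ x / mF μ x = ellH μ x * S13.Rf μ x := fun x => by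
    show ellH μ x / (S13.Rf μ x)⁻¹ = _
    rw [div_eq_mul_inv, inv_inv]
  have hrMnn := S13.rMinus_nn (μ := μ)
  have hAR : ∀ x, x₀ ≤ x →
      Af μ x * S13.Rf μ x = 1 + 2*(Af μ x * S13.rMinus' μ x) := by
    intro x hx
    have h1 := S13.Rsum hx₀ hApos hHint hx
    have h2 := S13.rsub hmean hx₀ hApos hHint hx
    have h3 : Af μ x * (Af μ x)⁻¹ = 1 := mul_inv_cancel₀ (hApos x hx).ne'
    have h4 : S13.rPlus' μ x = (Af μ x)⁻¹ + S13.rMinus' μ x := by linarith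
    rw [h1, h4]
    have h5 : Af μ x * ((Af μ x)⁻¹ + S13.rMinus' μ x + S13.rMinus' μ x)
        = Af μ x * (Af μ x)⁻¹ + 2*(Af μ x * S13.rMinus' μ x) := by ring
    rw [h5, h3]
  have hρeq : ∀ x, x₀ ≤ x → rMinus μ x / rPlus μ x
      = (Af μ x * S13.rMinus' μ x) / (1 + Af μ x * S13.rMinus' μ x) := by
    intro x hx
    have h2 := S13.rsub hmean hx₀ hApos hHint hx
    have hA := hApos x hx
    have h3 : Af μ x * (Af μ x)⁻¹ = 1 := mul_inv_cancel₀ hA.ne'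
    have h1 : 1 + Af μ x * S13.rMinus' μ x = Af μ x * S13.rPlus' μ x := by
      have h4 : S13.rPlus' μ x = (Af μ x)⁻¹ + S13.rMinus' μ x := by linarith
      rw [h4, mul_add, h3]
    have hrM : rMinus μ x = S13.rMinus' μ x := rfl
    have hrP : rPlus μ x = S13.rPlus' μ x := rfl
    rw [hrM, hrP, h1, mul_div_mul_left _ _ hA.ne']
  have hunn : ∀ x, x₀ ≤ x → 0 ≤ Af μ x * S13.rMinus' μ x := fun x hx =>
    mul_nonneg (hApos x hx).le (hrMnn x)
  have huof : Tendsto (fun x => Af μ x / mF μ x) atTop (𝓝 1) →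
      Tendsto (fun x => Af μ x * S13.rMinus' μ x) atTop (𝓝 0) := by
    intro h
    have h2 : Tendsto (fun x => (Af μ x / mF μ x - 1)/2) atTop (𝓝 ((1-1)/2)) :=
      (h.sub tendsto_const_nhds).div_const 2
    norm_num at h2
    refine h2.congr' ?_
    filter_upwards [eventually_ge_atTop x₀] with x hx
    rw [hdiv x, hAR x hx]
    ring
  constructor
  · constructor
    · intro hρ
      have hu : Tendsto (fun x => Af μ x * S13.rMinus' μ x) atTop (𝓝 0) := by
        have hden : Tendsto (fun x => 1 - rMinus μ x / rPlus μ x) atTop (𝓝 (1-0)) :=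
          tendsto_const_nhds.sub hρ
        norm_num at hden
        have h3 := hρ.div hden one_ne_zero
        norm_num at h3
        refine h3.congr' ?_
        filter_upwards [eventually_ge_atTop x₀] with x hx
        simp only [Pi.div_apply]
        rw [hρeq x hx]
        have hu0 := hunn x hx
        have h1pu : (0:ℝ) < 1 + Af μ x * S13.rMinus' μ x := by linarith
        field_simp
        ring
      have h4 : Tendsto (fun x => 1 + 2*(Af μ x * S13.rMinus' μ x)) atTop (𝓝 (1+2*0)) :=
        tendsto_const_nhds.add (hu.const_mul 2)
      norm_num at h4
      refine h4.congr' ?_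
      filter_upwards [eventually_ge_atTop x₀] with x hx
      rw [hdiv x, hAR x hx]
    · intro hAm
      have hu := huof hAm
      have hden : Tendsto (fun x => 1 + Af μ x * S13.rMinus' μ x) atTop (𝓝 (1+0)) :=
        tendsto_const_nhds.add hu
      norm_num at hden
      have h3 := hu.div hden one_ne_zero
      norm_num at h3
      refine h3.congr' ?_
      filter_upwards [eventually_ge_atTop x₀] with x hx
      simp only [Pi.div_apply]
      exact (hρeq x hx).symm
  · intro hAm
    have hu := huof hAm
    have hARt : Tendsto (fun x => Af μ x * S13.Rf μ x) atTop (𝓝 1) :=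
      hAm.congr fun x => hdiv x
    have hDA := S13.DA_tendsto hmean hx₀ hApos hHint hu
    have hfin : Tendsto (fun x => Af μ x * S13.Rf μ x
        + 2*(((∫ t in (0:ℝ)..x, S13.Gf μ t) / Af μ x) * (Af μ x * S13.Rf μ x)))
        atTop (𝓝 (1 + 2*(0*1))) := hARt.add ((hDA.mul hARt).const_mul 2)
    norm_num at hfin
    refine hfin.congr' ?_
    filter_upwards [eventually_ge_atTop x₀] with x hx
    have hxpos : (0:ℝ) ≤ x := le_trans hx₀.le hx
    have hA := hApos x hx
    rw [hldiv x, S13.ell_decomp (μ := μ) hxpos]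
    field_simp
end

section
/- Suppose X is a real random variable with E|X| = ∞ satisfying condition (Ha). Then ∫₀ˣ t H(t) dt = o(x A(x)) as x → ∞, where H(x) = P[|X| > x] and A(x) = ∫₀ˣ (P[X > t] - P[X < -t]) dt. -/
/-!
Fix `δ > 0`. By (Ha), `t H(t) ≤ δ A(t)` for all `t` beyond some `a ≥ 0`. Integration by parts gives
`∫ₐˣ A = x A(x) - a A(a) - ∫ₐˣ t K(t) dt`, and `|t K(t)| ≤ t H(t) ≤ δ A(t)`, so for `δ ≤ 1/2`
we get `∫ₐˣ A ≤ 2 x A(x)` and therefore `∫ₐˣ t H(t) dt ≤ 2δ x A(x)`. The remaining piece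
`∫₀ᵃ t H(t) dt` is a constant, and it is negligible because `x A(x) ≥ ∫ₐˣ H → ∞`, as
`∫₀^∞ H = E|X| = ∞`.
-/

open MeasureTheory Filter Set Asymptotics Topology

theorem MeasureTheory.LocallyIntegrable.intervalIntegrable {E : Type*} [NormedAddCommGroup E]
    {f : ℝ → E} (hf : LocallyIntegrable f volume) (a b : ℝ) : IntervalIntegrable f volume a b :=
  intervalIntegrable_iff.mpr <| (hf.integrableOn_isCompact isCompact_uIcc).mono_set uIoc_subset_uIcc

theorem integral_primitive_add_mul_eq {f : ℝ → ℝ} (hf : LocallyIntegrable f volume) (c a b : ℝ) :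
    ∫ t in a..b, ((∫ s in c..t, f s) + t * f t) =
      b * (∫ s in c..b, f s) - a * ∫ s in c..a, f s := by
  have hF : AbsolutelyContinuousOnInterval (fun x ↦ ∫ s in c..x, f s) a b := by
    refine ((hf.intervalIntegrable (min c (min a b)) (max c (max a b))
      ).absolutelyContinuousOnInterval_intervalIntegral ?_).mono (uIcc_subset_uIcc ?_ ?_) <;>
    simp
  have hid : AbsolutelyContinuousOnInterval id a b := contDiffOn_id.absolutelyContinuousOnInterval
  refine (intervalIntegral.integral_congr_ae ?_).trans (hid.integral_deriv_mul_eq_sub hF)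
  filter_upwards [LocallyIntegrable.ae_hasDerivAt_integral hf] with t ht _
  simp [(ht c).deriv]

theorem tendsto_intervalIntegral_atTop_of_lintegral_eq_top {g : ℝ → ℝ}
    (hg : LocallyIntegrable g volume) (hg₀ : 0 ≤ g) {a : ℝ}
    (htop : ∫⁻ t in Ioi a, ENNReal.ofReal (g t) = ⊤) :
    Tendsto (fun x ↦ ∫ t in a..x, g t) atTop atTop := by
  have hmono : Monotone fun x ↦ ∫ t in a..x, g t := fun x y hxy ↦ by
    dsimp only
    rw [← intervalIntegral.integral_add_adjacent_intervals (hg.intervalIntegrable a x)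
      (hg.intervalIntegrable x y)]
    exact le_add_of_nonneg_right (intervalIntegral.integral_nonneg hxy fun t _ ↦ hg₀ t)
  refine tendsto_atTop_atTop_of_monotone' hmono fun ⟨M, hM⟩ ↦ ?_
  have hint : IntegrableOn g (Ioi a) := by
    refine integrableOn_Ioi_of_intervalIntegral_norm_bounded M a
      (fun x ↦ (hg.intervalIntegrable a x).1) tendsto_id (Eventually.of_forall fun x ↦ ?_)
    simpa only [Real.norm_of_nonneg (hg₀ _)] using hM ⟨x, rfl⟩
  exact hint.lintegral_lt_top.ne htop

theorem eventually_le_mul_of_tendsto_div_atTop {α : Type*} {l : Filter α} {f g : α → ℝ}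
    (h : Tendsto (fun x ↦ f x / g x) l atTop) (hg : ∀ᶠ x in l, 0 ≤ g x) {δ : ℝ} (hδ : 0 < δ) :
    ∀ᶠ x in l, g x ≤ δ * f x := by
  filter_upwards [h.eventually_ge_atTop δ⁻¹, hg] with x hx hgx
  have hgx' : 0 < g x := hgx.lt_of_ne fun h0 ↦ by
    rw [← h0, div_zero] at hx
    exact (inv_pos.2 hδ).not_ge hx
  rw [le_div_iff₀ hgx'] at hx
  calc g x = δ * (δ⁻¹ * g x) := by field_simp
    _ ≤ δ * f x := by gcongr

section Primitive

variable {K H : ℝ → ℝ}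

theorem eventually_mul_le_mul_primitive (hKH : ∀ t, 0 ≤ t → |K t| ≤ H t)
    (hHa : Tendsto (fun x ↦ (∫ s in (0:ℝ)..x, K s) / (x * H x)) atTop atTop) {δ : ℝ}
    (hδ : 0 < δ) : ∀ᶠ x in atTop, x * H x ≤ δ * ∫ s in (0:ℝ)..x, K s := by
  refine eventually_le_mul_of_tendsto_div_atTop hHa ?_ hδ
  filter_upwards [eventually_ge_atTop 0] with x hx
  exact mul_nonneg hx ((abs_nonneg _).trans (hKH x hx))

theorem intervalIntegral_mul_le_of_mul_le_primitive (hK : LocallyIntegrable K volume)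
    (hH : LocallyIntegrable H volume) (hKH : ∀ t, 0 ≤ t → |K t| ≤ H t) {δ a b : ℝ}
    (hδ : 0 < δ) (hδ₂ : δ ≤ 1 / 2) (ha : 0 ≤ a) (hab : a ≤ b)
    (hbound : ∀ t ∈ Icc a b, t * H t ≤ δ * ∫ s in (0:ℝ)..t, K s) :
    ∫ t in a..b, t * H t ≤ 2 * δ * (b * ∫ s in (0:ℝ)..b, K s) := by
  set A := fun x ↦ ∫ s in (0:ℝ)..x, K s
  have hA : Continuous A := intervalIntegral.continuous_primitive hK.intervalIntegrable 0
  have htH : IntervalIntegrable (fun t ↦ t * H t) volume a b :=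
    (hH.intervalIntegrable a b).continuousOn_mul continuousOn_id
  have htK : IntervalIntegrable (fun t ↦ t * K t) volume a b :=
    (hK.intervalIntegrable a b).continuousOn_mul continuousOn_id
  have hH₀ : ∀ t, 0 ≤ t → 0 ≤ t * H t := fun t ht ↦
    mul_nonneg ht ((abs_nonneg _).trans (hKH t ht))
  have hJ : ∫ t in a..b, t * H t ≤ δ * ∫ t in a..b, A t := by
    rw [← intervalIntegral.integral_const_mul]
    exact intervalIntegral.integral_mono_on hab htH ((hA.intervalIntegrable a b).const_mul δ) hbound
  have hJ₀ : 0 ≤ ∫ t in a..b, t * H t :=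
    intervalIntegral.integral_nonneg hab fun t ht ↦ hH₀ t (ha.trans ht.1)
  have hL : |∫ t in a..b, t * K t| ≤ ∫ t in a..b, t * H t := by
    refine (intervalIntegral.abs_integral_le_integral_abs hab).trans
      (intervalIntegral.integral_mono_on hab htK.abs htH fun t ht ↦ ?_)
    have ht₀ : 0 ≤ t := ha.trans ht.1
    rw [abs_mul, abs_of_nonneg ht₀]
    exact mul_le_mul_of_nonneg_left (hKH t ht₀) ht₀
  have haA : 0 ≤ a * A a := mul_nonneg ha <|
    (mul_nonneg_iff_of_pos_left hδ).mp ((hH₀ a ha).trans (hbound a ⟨le_rfl, hab⟩))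
  have hibp := integral_primitive_add_mul_eq hK 0 a b
  rw [intervalIntegral.integral_add (hA.intervalIntegrable a b) htK] at hibp
  have hI : (1 - δ) * ∫ t in a..b, A t ≤ b * A b := by
    linarith [abs_le.mp hL]
  have hI₀ : 0 ≤ ∫ t in a..b, A t := (mul_nonneg_iff_of_pos_left hδ).mp (hJ₀.trans hJ)
  calc ∫ t in a..b, t * H t ≤ δ * ∫ t in a..b, A t := hJ
    _ ≤ 2 * δ * ((1 - δ) * ∫ t in a..b, A t) := by
        nlinarith [mul_nonneg (mul_nonneg hδ.le hI₀) (by linarith : (0:ℝ) ≤ 1 - 2 * δ)]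
    _ ≤ 2 * δ * (b * A b) := by gcongr

theorem tendsto_mul_primitive_atTop (hK : LocallyIntegrable K volume)
    (hH : LocallyIntegrable H volume) (hKH : ∀ t, 0 ≤ t → |K t| ≤ H t)
    (hdiv : Tendsto (fun x ↦ ∫ t in (0:ℝ)..x, H t) atTop atTop)
    (hHa : Tendsto (fun x ↦ (∫ s in (0:ℝ)..x, K s) / (x * H x)) atTop atTop) :
    Tendsto (fun x ↦ x * ∫ s in (0:ℝ)..x, K s) atTop atTop := by
  obtain ⟨x₀, hx₀⟩ := eventually_atTop.mp
    ((eventually_ge_atTop 1).and (eventually_mul_le_mul_primitive hKH hHa one_half_pos))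
  refine tendsto_atTop_mono' _ ?_
    (tendsto_atTop_add_const_right _ (-∫ t in (0:ℝ)..x₀, H t) hdiv)
  filter_upwards [eventually_ge_atTop x₀] with x hx
  rw [← sub_eq_add_neg, intervalIntegral.integral_interval_sub_left (hH.intervalIntegrable 0 x)
    (hH.intervalIntegrable 0 x₀)]
  calc ∫ t in x₀..x, H t ≤ ∫ t in x₀..x, t * H t := by
        refine intervalIntegral.integral_mono_on hx (hH.intervalIntegrable x₀ x)
          ((hH.intervalIntegrable x₀ x).continuousOn_mul continuousOn_id) fun t ht ↦ ?_
        have ht₁ : 1 ≤ t := (hx₀ t ht.1).1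
        exact le_mul_of_one_le_left ((abs_nonneg _).trans (hKH t (zero_le_one.trans ht₁))) ht₁
    _ ≤ 2 * (1 / 2) * (x * ∫ s in (0:ℝ)..x, K s) :=
        intervalIntegral_mul_le_of_mul_le_primitive hK hH hKH one_half_pos le_rfl
          (zero_le_one.trans (hx₀ x₀ le_rfl).1) hx fun t ht ↦ (hx₀ t ht.1).2
    _ = x * ∫ s in (0:ℝ)..x, K s := by ring

theorem intervalIntegral_mul_isLittleO_mul_primitive (hK : LocallyIntegrable K volume)
    (hH : LocallyIntegrable H volume) (hKH : ∀ t, 0 ≤ t → |K t| ≤ H t)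
    (hdiv : Tendsto (fun x ↦ ∫ t in (0:ℝ)..x, H t) atTop atTop)
    (hHa : Tendsto (fun x ↦ (∫ s in (0:ℝ)..x, K s) / (x * H x)) atTop atTop) :
    (fun x ↦ ∫ t in (0:ℝ)..x, t * H t) =o[atTop] fun x ↦ x * ∫ s in (0:ℝ)..x, K s := by
  have hxA := tendsto_mul_primitive_atTop hK hH hKH hdiv hHa
  rw [isLittleO_iff]
  intro ε hε
  set δ := min (1 / 2) (ε / 4)
  have hδ : 0 < δ := lt_min one_half_pos (by linarith)
  obtain ⟨x₀, hx₀⟩ := eventually_atTop.mp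
    ((eventually_ge_atTop 0).and (eventually_mul_le_mul_primitive hKH hHa hδ))
  set C := ∫ t in (0:ℝ)..x₀, t * H t
  filter_upwards [eventually_ge_atTop x₀, hxA.eventually_ge_atTop (2 * C / ε)] with x hx hCx
  have hx₀₀ : 0 ≤ x₀ := (hx₀ x₀ le_rfl).1
  have htH : ∀ a b, IntervalIntegrable (fun t ↦ t * H t) volume a b := fun a b ↦
    (hH.intervalIntegrable a b).continuousOn_mul continuousOn_id
  have hsplit : ∫ t in (0:ℝ)..x, t * H t = C + ∫ t in x₀..x, t * H t :=
    (intervalIntegral.integral_add_adjacent_intervals (htH 0 x₀) (htH x₀ x)).symm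
  have htail : ∫ t in x₀..x, t * H t ≤ 2 * δ * (x * ∫ s in (0:ℝ)..x, K s) :=
    intervalIntegral_mul_le_of_mul_le_primitive hK hH hKH hδ (min_le_left _ _) hx₀₀ hx
      fun t ht ↦ (hx₀ t ht.1).2
  have hlhs : 0 ≤ ∫ t in (0:ℝ)..x, t * H t :=
    intervalIntegral.integral_nonneg (hx₀₀.trans hx) fun t ht ↦
      mul_nonneg ht.1 ((abs_nonneg _).trans (hKH t ht.1))
  have hC : 0 ≤ C := intervalIntegral.integral_nonneg hx₀₀ fun t ht ↦
    mul_nonneg ht.1 ((abs_nonneg _).trans (hKH t ht.1))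
  have hrhs : 0 ≤ x * ∫ s in (0:ℝ)..x, K s := (by positivity : 0 ≤ 2 * C / ε).trans hCx
  rw [div_le_iff₀ hε] at hCx
  rw [Real.norm_of_nonneg hlhs, Real.norm_of_nonneg hrhs, hsplit]
  linarith [mul_le_mul_of_nonneg_right (min_le_right (1 / 2) (ε / 4)) hrhs]

end Primitive

section Distribution

variable (μ : Measure ℝ) [IsFiniteMeasure μ]

theorem antitone_Hf : Antitone (Hf μ) := fun _ _ h ↦
  measureReal_mono fun _ hy ↦ h.trans_lt hy

theorem locallyIntegrable_Kf : LocallyIntegrable (Kf μ) volume := by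
  have hpos : Antitone fun x ↦ μ.real (Ioi x) := fun _ _ h ↦ measureReal_mono (Ioi_subset_Ioi h)
  have hneg : Antitone fun x ↦ μ.real (Iio (-x)) := fun _ _ h ↦
    measureReal_mono (Iio_subset_Iio (neg_le_neg h))
  exact hpos.locallyIntegrable.sub hneg.locallyIntegrable

theorem abs_Kf_le_Hf {x : ℝ} (hx : 0 ≤ x) : |Kf μ x| ≤ Hf μ x :=
  abs_sub_le_of_nonneg_of_le ENNReal.toReal_nonneg
    (measureReal_mono fun y (hy : x < y) ↦ hy.trans_le (le_abs_self y)) ENNReal.toReal_nonneg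
    (measureReal_mono fun y (hy : y < -x) ↦ show x < |y| by rw [abs_of_neg (by linarith)]; linarith)

theorem lintegral_Hf_eq_top (hmean : ∫⁻ x, ENNReal.ofReal |x| ∂μ = ⊤) :
    ∫⁻ t in Ioi 0, ENNReal.ofReal (Hf μ t) = ⊤ := by
  rw [← hmean, lintegral_eq_lintegral_meas_lt μ (ae_of_all _ abs_nonneg) measurable_abs.aemeasurable]
  simp only [Hf, ENNReal.ofReal_toReal (measure_ne_top μ _)]

end Distribution

/-- Under (Ha), `∫₀ˣ t H(t) dt = o(x A(x))` as `x → ∞`. -/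
theorem stmt15 (μ : Measure ℝ) [IsProbabilityMeasure μ]
    (hmean : ∫⁻ x, ENNReal.ofReal |x| ∂μ = ⊤)
    (hHa : HaCond μ) :
    (fun x => ∫ t in (0:ℝ)..x, t * Hf μ t) =o[atTop] fun x => x * Af μ x :=
  intervalIntegral_mul_isLittleO_mul_primitive (locallyIntegrable_Kf μ)
    (antitone_Hf μ).locallyIntegrable (fun _ ↦ abs_Kf_le_Hf μ)
    (tendsto_intervalIntegral_atTop_of_lintegral_eq_top (antitone_Hf μ).locallyIntegrable
      (fun _ ↦ ENNReal.toReal_nonneg) (lintegral_Hf_eq_top μ hmean)) hHa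
end

section
/- For any real random variable X with non-arithmetic distribution there exist constants M ≥ 1 and δ > 0 such that for all 0 < u < 1 and 0 < s < 1: |u · Im(1/(1 - sφ(u)))| ≤ u E|sin uX| / |1 - φ(u)|² ≤ M · Re(1/(1 - φ(u))). In particular, if ∫₀^1 Re(1/(1-φ(u))) du < ∞ then ∫₀^1 |u · Im(1/(1-φ(u)))| du < ∞. -/
open MeasureTheory Filter Set Asymptotics Topology

namespace Stmt17Aux

variable (μ : Measure ℝ) [IsProbabilityMeasure μ]

lemma contExp (u : ℝ) : Continuous fun x : ℝ => Complex.exp (Complex.I * u * x) := by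
  exact Complex.continuous_exp.comp (continuous_const.mul Complex.continuous_ofReal)

lemma intb {f : ℝ → ℝ} (hf : Continuous f) (C : ℝ) (h : ∀ x, |f x| ≤ C) :
    Integrable f μ :=
  (integrable_const C).mono' hf.aestronglyMeasurable
    (Filter.Eventually.of_forall (by simpa [Real.norm_eq_abs] using h))

lemma intExp (u : ℝ) : Integrable (fun x : ℝ => Complex.exp (Complex.I * u * x)) μ := by
  refine (integrable_const 1).mono' (contExp u).aestronglyMeasurable
    (Filter.Eventually.of_forall fun x => ?_)
  have : Complex.I * u * x = ((u * x : ℝ) : ℂ) * Complex.I := by push_cast; ring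
  rw [this, Complex.norm_exp_ofReal_mul_I]

lemma exp_re (u x : ℝ) : (Complex.exp (Complex.I * u * x)).re = Real.cos (u * x) := by
  have : Complex.I * u * x = ((u * x : ℝ) : ℂ) * Complex.I := by push_cast; ring
  rw [this, Complex.exp_ofReal_mul_I_re]

lemma exp_im (u x : ℝ) : (Complex.exp (Complex.I * u * x)).im = Real.sin (u * x) := by
  have : Complex.I * u * x = ((u * x : ℝ) : ℂ) * Complex.I := by push_cast; ring
  rw [this, Complex.exp_ofReal_mul_I_im]

end Stmt17Aux

namespace Stmt17Aux
variable (μ : Measure ℝ) [IsProbabilityMeasure μ]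

lemma charF_re (u : ℝ) : (charF μ u).re = ∫ x, Real.cos (u * x) ∂μ := by
  rw [charF, ← RCLike.re_eq_complex_re, ← integral_re (intExp μ u)]
  simp only [RCLike.re_eq_complex_re, exp_re]

lemma charF_im (u : ℝ) : (charF μ u).im = ∫ x, Real.sin (u * x) ∂μ := by
  rw [charF, ← RCLike.im_eq_complex_im, ← integral_im (intExp μ u)]
  simp only [RCLike.im_eq_complex_im, exp_im]

lemma abs_charF_le (u : ℝ) : ‖charF μ u‖ ≤ 1 := by
  rw [charF]
  calc ‖∫ x, Complex.exp (Complex.I * u * x) ∂μ‖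
      ≤ ∫ x, ‖Complex.exp (Complex.I * u * x)‖ ∂μ := by
        exact
          norm_integral_le_integral_norm (fun x : ℝ => Complex.exp (Complex.I * u * x)) (μ := μ)
    _ ≤ 1 := by
        have : ∀ x : ℝ, ‖Complex.exp (Complex.I * u * x)‖ = 1 := by
          intro x
          have h : Complex.I * u * x = ((u * x : ℝ) : ℂ) * Complex.I := by push_cast; ring
          rw [h, Complex.norm_exp_ofReal_mul_I]
        rw [integral_congr_ae (Filter.Eventually.of_forall this)]
        simp

lemma continuous_charF : Continuous (charF μ) := by
  apply continuous_of_dominated (bound := fun _ : ℝ => (1:ℝ))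
  · exact fun u => (contExp u).aestronglyMeasurable
  · intro u
    refine Filter.Eventually.of_forall fun x => ?_
    have h : Complex.I * u * x = ((u * x : ℝ) : ℂ) * Complex.I := by push_cast; ring
    rw [h, Complex.norm_exp_ofReal_mul_I]
  · exact integrable_const 1
  · exact Filter.Eventually.of_forall fun x =>
      Complex.continuous_exp.comp ((continuous_const.mul Complex.continuous_ofReal).mul
        continuous_const)
end Stmt17Aux

namespace Stmt17Aux
variable (μ : Measure ℝ) [IsProbabilityMeasure μ]

lemma int_cos (u : ℝ) : Integrable (fun x : ℝ => Real.cos (u * x)) μ :=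
  intb μ (Real.continuous_cos.comp (continuous_const.mul continuous_id)) 1
    (fun x => Real.abs_cos_le_one _)

lemma int_one_sub_cos (u : ℝ) : Integrable (fun x : ℝ => 1 - Real.cos (u * x)) μ :=
  (integrable_const 1).sub (int_cos μ u)

lemma oneSub (u : ℝ) : 1 - (charF μ u).re = ∫ x, (1 - Real.cos (u * x)) ∂μ := by
  rw [charF_re, integral_sub (integrable_const 1) (int_cos μ u)]
  simp

lemma arith_of (u : ℝ) (hu : 0 < u)
    (h : ∫ x, (1 - Real.cos (u * x)) ∂μ = 0) : IsArith μ := by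
  have hnn : 0 ≤ fun x : ℝ => 1 - Real.cos (u * x) := by
    intro x; simp only [Pi.zero_apply]
    nlinarith [Real.cos_le_one (u * x)]
  have hae := (integral_eq_zero_iff_of_nonneg hnn (int_one_sub_cos μ u)).mp h
  refine ⟨2 * Real.pi / u, by positivity, ?_⟩
  set S : Set ℝ := {x : ℝ | ∃ n : ℤ, x = n * (2 * Real.pi / u)} with hS
  have hSm : MeasurableSet S := by
    have : S = Set.range (fun n : ℤ => (n : ℝ) * (2 * Real.pi / u)) := by
      ext x; simp [hS, eq_comm]
    rw [this]
    exact (Set.countable_range _).measurableSet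
  rw [← prob_compl_eq_zero_iff hSm]
  rw [← le_zero_iff]
  have hz : μ {x : ℝ | ¬ (1 - Real.cos (u * x) = 0)} = 0 := by
    have h2 := hae
    rw [Filter.EventuallyEq, ae_iff] at h2
    simpa using h2
  have hsub : Sᶜ ⊆ {x : ℝ | ¬ (1 - Real.cos (u * x) = 0)} := by
    intro x hx
    simp only [Set.mem_setOf_eq]
    intro hcos
    apply hx
    have hc1 : Real.cos (u * x) = 1 := by linarith
    obtain ⟨n, hn⟩ := (Real.cos_eq_one_iff (u * x)).mp hc1
    exact ⟨n, by field_simp at hn ⊢; linarith⟩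
  exact le_trans (measure_mono hsub) (le_of_eq hz)
end Stmt17Aux

namespace Stmt17Aux
variable (μ : Measure ℝ) [IsProbabilityMeasure μ]

lemma oneSub_pos (harith : ¬ IsArith μ) {u : ℝ} (hu : 0 < u) :
    0 < 1 - (charF μ u).re := by
  rw [oneSub]
  have hnn : ∀ x : ℝ, (0:ℝ) ≤ 1 - Real.cos (u * x) :=
    fun x => by nlinarith [Real.cos_le_one (u * x)]
  rcases lt_or_eq_of_le (integral_nonneg (f := fun x : ℝ => 1 - Real.cos (u * x)) fun x => hnn x) with h | h
  · exact h
  · exact absurd (arith_of μ u hu h.symm) harith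

lemma sin_lin {t : ℝ} (h0 : 0 ≤ t) (h1 : t ≤ 1) : t * Real.sin 1 ≤ Real.sin t := by
  have hpi : (1:ℝ) ≤ Real.pi := by nlinarith [Real.pi_gt_three]
  have hc := strictConcaveOn_sin_Icc.concaveOn.2
    (Set.mem_Icc.mpr ⟨zero_le_one, hpi⟩)
    (Set.mem_Icc.mpr ⟨le_refl (0:ℝ), Real.pi_pos.le⟩)
    h0 (by linarith : (0:ℝ) ≤ 1 - t) (by ring)
  simpa using hc

lemma sin_sq_lb {t : ℝ} (h : |t| ≤ 1) : Real.sin 1 ^ 2 * t ^ 2 ≤ Real.sin t ^ 2 := by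
  have key : ∀ r : ℝ, 0 ≤ r → r ≤ 1 → Real.sin 1 ^ 2 * r ^ 2 ≤ Real.sin r ^ 2 := by
    intro r h0 h1
    have := sin_lin h0 h1
    have hs : 0 ≤ r * Real.sin 1 := mul_nonneg h0 (Real.sin_nonneg_of_nonneg_of_le_pi
      zero_le_one (by nlinarith [Real.pi_gt_three]))
    nlinarith
  rcases le_or_gt 0 t with ht | ht
  · exact key t ht (by rwa [abs_of_nonneg ht] at h)
  · have h' := key (-t) (by linarith) (by rwa [abs_of_neg ht] at h)
    simpa [Real.sin_neg] using h'

lemma one_sub_cos_lb {t : ℝ} (h : |t| ≤ 2) :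
    Real.sin 1 ^ 2 / 2 * t ^ 2 ≤ 1 - Real.cos t := by
  have h2 : |t / 2| ≤ 1 := by rw [abs_div]; simp; linarith [abs_nonneg t]
  have := sin_sq_lb h2
  have hid : Real.sin (t / 2) ^ 2 = 1 / 2 - Real.cos t / 2 := by
    have := Real.sin_sq_eq_half_sub (t / 2)
    rwa [show 2 * (t / 2) = t by ring] at this
  nlinarith

end Stmt17Aux

namespace Stmt17Aux
variable (μ : Measure ℝ) [IsProbabilityMeasure μ]

lemma key (harith : ¬ IsArith μ) :
    ∃ c : ℝ, 0 < c ∧ ∀ u ∈ Set.Ioc (0:ℝ) 1, c * u ^ 2 ≤ 1 - (charF μ u).re := by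
  -- μ is not concentrated at 0
  have hne : μ {x : ℝ | x ≠ 0} ≠ 0 := by
    intro h0
    apply harith
    refine ⟨1, one_pos, ?_⟩
    have hSm : MeasurableSet {x : ℝ | ∃ n : ℤ, x = n * (1:ℝ)} := by
      have : {x : ℝ | ∃ n : ℤ, x = n * (1:ℝ)} = Set.range (fun n : ℤ => (n:ℝ) * 1) := by
        ext x; simp [eq_comm]
      rw [this]; exact (Set.countable_range _).measurableSet
    rw [← prob_compl_eq_zero_iff hSm, ← le_zero_iff]
    refine le_trans (measure_mono ?_) (le_of_eq h0)
    intro x hx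
    simp only [Set.mem_compl_iff, Set.mem_setOf_eq, not_exists] at hx
    intro hx0
    exact hx 0 (by simp [hx0])
  -- find a truncation level
  obtain ⟨n, hn⟩ : ∃ n : ℕ, μ {x : ℝ | x ≠ 0 ∧ |x| ≤ (n:ℝ)} ≠ 0 := by
    by_contra hall
    push_neg at hall
    apply hne
    have : {x : ℝ | x ≠ 0} ⊆ ⋃ n : ℕ, {x : ℝ | x ≠ 0 ∧ |x| ≤ (n:ℝ)} := by
      intro x hx
      obtain ⟨n, hn⟩ := exists_nat_ge |x|
      exact Set.mem_iUnion.mpr ⟨n, hx, hn⟩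
    exact le_antisymm (le_trans (measure_mono this)
      (le_of_eq (measure_iUnion_null hall))) (zero_le)
  set R : ℝ := max (n:ℝ) 2 with hR
  have hR2 : (2:ℝ) ≤ R := le_max_right _ _
  have hRpos : (0:ℝ) < R := lt_of_lt_of_le two_pos hR2
  have hintsq : IntegrableOn (fun x : ℝ => x ^ 2) (Set.Icc (-R) R) μ :=
    (continuous_pow 2).continuousOn.integrableOn_compact isCompact_Icc
  set c₂ : ℝ := ∫ x in Set.Icc (-R) R, x ^ 2 ∂μ with hc₂
  have hc₂pos : 0 < c₂ := by
    rcases lt_or_eq_of_le (integral_nonneg (fun x : ℝ => sq_nonneg x) :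
        (0:ℝ) ≤ ∫ x in Set.Icc (-R) R, x ^ 2 ∂μ) with h | h
    · exact h
    · exfalso
      have hz := (integral_eq_zero_iff_of_nonneg (fun x : ℝ => sq_nonneg x) hintsq).mp h.symm
      have h2 : ∀ᵐ x ∂μ, x ∈ Set.Icc (-R) R → x ^ 2 = 0 :=
        (ae_restrict_iff' measurableSet_Icc).mp hz
      rw [ae_iff] at h2
      apply hn
      refine le_antisymm (le_trans (measure_mono ?_) (le_of_eq h2)) (zero_le)
      intro x hx
      simp only [Set.mem_setOf_eq] at hx ⊢
      intro hcon
      have hxIcc : x ∈ Set.Icc (-R) R := by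
        rcases abs_le.mp (le_trans hx.2 (le_max_left _ _)) with ⟨h1, h2⟩
        exact ⟨h1, h2⟩
      exact hx.1 (pow_eq_zero_iff (n := 2) (by norm_num) |>.mp (hcon hxIcc))
  set c₁ : ℝ := Real.sin 1 ^ 2 / 2 * c₂ with hc₁def
  have hsin1 : 0 < Real.sin 1 := Real.sin_pos_of_pos_of_lt_pi one_pos
    (by nlinarith [Real.pi_gt_three])
  have hc₁pos : 0 < c₁ := by positivity
  -- small u bound
  have hsmall : ∀ u : ℝ, 0 < u → u ≤ 2 / R → c₁ * u ^ 2 ≤ 1 - (charF μ u).re := by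
    intro u hu hu2
    rw [oneSub]
    have step1 : ∫ x in Set.Icc (-R) R, (1 - Real.cos (u * x)) ∂μ
        ≤ ∫ x, (1 - Real.cos (u * x)) ∂μ :=
      setIntegral_le_integral (int_one_sub_cos μ u)
        (Filter.Eventually.of_forall fun x => by
          simp only [Pi.zero_apply]; nlinarith [Real.cos_le_one (u * x)])
    have step2 : ∫ x in Set.Icc (-R) R, (Real.sin 1 ^ 2 / 2 * u ^ 2 * x ^ 2) ∂μ
        ≤ ∫ x in Set.Icc (-R) R, (1 - Real.cos (u * x)) ∂μ := by
      refine setIntegral_mono_on (hintsq.const_mul _) ((int_one_sub_cos μ u).integrableOn)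
        measurableSet_Icc ?_
      intro x hx
      have habs : |u * x| ≤ 2 := by
        rw [abs_mul, abs_of_pos hu]
        calc u * |x| ≤ (2 / R) * R := by
              apply mul_le_mul hu2 (abs_le.mpr ⟨hx.1, hx.2⟩) (abs_nonneg x) (by positivity)
          _ = 2 := by field_simp
      have := one_sub_cos_lb habs
      calc Real.sin 1 ^ 2 / 2 * u ^ 2 * x ^ 2 = Real.sin 1 ^ 2 / 2 * (u * x) ^ 2 := by ring
        _ ≤ 1 - Real.cos (u * x) := this
    have step3 : ∫ x in Set.Icc (-R) R, (Real.sin 1 ^ 2 / 2 * u ^ 2 * x ^ 2) ∂μ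
        = c₁ * u ^ 2 := by
      rw [integral_const_mul]
      rw [hc₁def]; ring
    linarith
  -- compact part
  have hcont : Continuous fun u : ℝ => 1 - (charF μ u).re :=
    continuous_const.sub (Complex.continuous_re.comp (continuous_charF μ))
  have h2R1 : 2 / R ≤ 1 := by
    rw [div_le_one hRpos]; exact hR2
  have h2Rpos : 0 < 2 / R := by positivity
  obtain ⟨u₀, hu₀mem, hu₀min⟩ :=
    isCompact_Icc.exists_isMinOn (Set.nonempty_Icc.mpr h2R1)
      hcont.continuousOn (s := Set.Icc (2 / R) 1)
  have hmpos : 0 < 1 - (charF μ u₀).re :=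
    oneSub_pos μ harith (lt_of_lt_of_le h2Rpos hu₀mem.1)
  refine ⟨min c₁ (1 - (charF μ u₀).re), lt_min hc₁pos hmpos, ?_⟩
  intro u hu
  rcases le_or_gt u (2 / R) with hcase | hcase
  · exact le_trans (mul_le_mul_of_nonneg_right (min_le_left _ _) (sq_nonneg u))
      (hsmall u hu.1 hcase)
  · have humem : u ∈ Set.Icc (2 / R) 1 := ⟨le_of_lt hcase, hu.2⟩
    have h1 := hu₀min humem
    have hu1 : u ^ 2 ≤ 1 := by nlinarith [hu.1, hu.2]
    calc min c₁ (1 - (charF μ u₀).re) * u ^ 2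
        ≤ (1 - (charF μ u₀).re) * 1 :=
          mul_le_mul (min_le_right _ _) hu1 (sq_nonneg u) (le_of_lt hmpos)
      _ = 1 - (charF μ u₀).re := mul_one _
      _ ≤ 1 - (charF μ u).re := h1
end Stmt17Aux

namespace Stmt17Aux
variable (μ : Measure ℝ) [IsProbabilityMeasure μ]

lemma int_abs_sin (u : ℝ) : Integrable (fun x : ℝ => |Real.sin (u * x)|) μ :=
  intb μ (Real.continuous_sin.comp (continuous_const.mul continuous_id)).abs 1
    (fun x => by rw [abs_abs]; exact Real.abs_sin_le_one _)

lemma sin_bound (u : ℝ) :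
    (∫ x, |Real.sin (u * x)| ∂μ) ^ 2 ≤ 2 * (1 - (charF μ u).re) := by
  set f : ℝ → ℝ := fun x => |Real.sin (u * x)| with hf
  have hfc : Continuous f := (Real.continuous_sin.comp (continuous_const.mul continuous_id)).abs
  have hmem : MemLp f 2 μ :=
    (memLp_top_of_bound hfc.aestronglyMeasurable 1 (Filter.Eventually.of_forall fun x => by
      simp only [hf, Real.norm_eq_abs, abs_abs]; exact Real.abs_sin_le_one _)).mono_exponent
      le_top
  have hvar := ProbabilityTheory.variance_nonneg f μ
  rw [ProbabilityTheory.variance_eq_sub hmem] at hvar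
  have hsq : ∫ x, (f ^ 2) x ∂μ ≤ 2 * (1 - (charF μ u).re) := by
    rw [oneSub, ← integral_const_mul]
    refine integral_mono ?_ ((int_one_sub_cos μ u).const_mul 2) ?_
    · have : (f ^ 2 : ℝ → ℝ) = fun x => Real.sin (u * x) ^ 2 := by
        ext x; simp [hf, sq_abs]
      rw [this]
      exact intb μ (by continuity) 1 (fun x => by
        rw [abs_of_nonneg (sq_nonneg _)]
        nlinarith [Real.neg_one_le_sin (u * x), Real.sin_le_one (u * x)])
    · intro x
      simp only [Pi.pow_apply, hf, sq_abs]
      nlinarith [Real.sin_sq_add_cos_sq (u * x), Real.cos_le_one (u * x),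
        Real.neg_one_le_cos (u * x)]
  have : (∫ x, f x ∂μ) ^ 2 ≤ ∫ x, (f ^ 2) x ∂μ := by linarith
  exact le_trans this hsq

end Stmt17Aux

namespace Stmt17Aux
variable (μ : Measure ℝ) [IsProbabilityMeasure μ]

lemma arith_core {c u B g M : ℝ} (hc : 0 < c) (hg : 0 < g) (hu : 0 < u) (hB0 : 0 ≤ B)
    (hB2 : B ^ 2 ≤ 2 * g) (hu2 : c * u ^ 2 ≤ g) (hMdef : M = 1 + Real.sqrt (2 / c)) :
    u * B ≤ M * g := by
  have hM1 : 1 ≤ M := hMdef ▸ le_add_of_nonneg_right (Real.sqrt_nonneg _)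
  have hM2 : 2 ≤ c * M ^ 2 := by
    have hs2 : Real.sqrt (2 / c) ^ 2 = 2 / c := Real.sq_sqrt (by positivity)
    have h3 : 2 / c ≤ M ^ 2 := by rw [hMdef]; nlinarith [Real.sqrt_nonneg (2 / c)]
    calc (2:ℝ) = c * (2 / c) := by field_simp
      _ ≤ c * M ^ 2 := mul_le_mul_of_nonneg_left h3 (le_of_lt hc)
  have h1 : c * u ^ 2 * B ^ 2 ≤ g * (2 * g) :=
    mul_le_mul hu2 hB2 (sq_nonneg B) (le_of_lt hg)
  have h2 : 2 * g ^ 2 ≤ c * M ^ 2 * g ^ 2 := by nlinarith [sq_nonneg g]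
  have hsq : (u * B) ^ 2 ≤ (M * g) ^ 2 := by nlinarith
  have hres := abs_le_of_sq_le_sq' hsq
    (mul_nonneg (by linarith : (0:ℝ) ≤ M) (le_of_lt hg))
  have huB : 0 ≤ u * B := mul_nonneg (le_of_lt hu) hB0
  calc u * B = |u * B| := (abs_of_nonneg huB).symm
    _ ≤ M * g := by rw [abs_of_nonneg huB]; exact hres.2

lemma chain (harith : ¬ IsArith μ) :
    ∃ M : ℝ, 1 ≤ M ∧ ∀ u ∈ Set.Ioc (0:ℝ) 1, ∀ s : ℝ, 0 < s → s ≤ 1 →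
      |u * ((1 - (s:ℂ) * charF μ u)⁻¹).im|
          ≤ u * (∫ x, |Real.sin (u * x)| ∂μ) / ‖1 - charF μ u‖ ^ 2 ∧
      u * (∫ x, |Real.sin (u * x)| ∂μ) / ‖1 - charF μ u‖ ^ 2
          ≤ M * ((1 - charF μ u)⁻¹).re := by
  obtain ⟨c, hc, hkey⟩ := key μ harith
  obtain ⟨M, hMdef⟩ : ∃ M : ℝ, M = 1 + Real.sqrt (2 / c) := ⟨_, rfl⟩
  have hM1 : 1 ≤ M := hMdef ▸ le_add_of_nonneg_right (Real.sqrt_nonneg _)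
  refine ⟨M, hM1, ?_⟩
  intro u hu s hs hs1
  set φ : ℂ := charF μ u with hφ
  set a : ℝ := φ.re with haa
  set b : ℝ := φ.im with hbb
  have hg : 0 < 1 - a := oneSub_pos μ harith hu.1
  have hρ : a ^ 2 + b ^ 2 ≤ 1 := by
    have h1 := abs_charF_le μ u
    have h2 : Complex.normSq φ ≤ 1 := by
      rw [← Complex.sq_norm]
      nlinarith [norm_nonneg φ]
    simpa [Complex.normSq_apply, sq] using h2
  set N : ℝ := Complex.normSq (1 - φ) with hN
  have hNval : N = (1 - a) ^ 2 + b ^ 2 := by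
    rw [hN, Complex.normSq_apply]
    simp [Complex.sub_re, Complex.sub_im]
    ring
  have hNpos : 0 < N := by nlinarith
  set Ns : ℝ := Complex.normSq (1 - (s:ℂ) * φ) with hNs
  have hNsval : Ns = (1 - s * a) ^ 2 + (s * b) ^ 2 := by
    rw [hNs, Complex.normSq_apply]
    simp [Complex.sub_re, Complex.sub_im, Complex.mul_re, Complex.mul_im]
    ring
  have hsa : s * a < 1 := by nlinarith [mul_pos hs hg]
  have hNspos : 0 < Ns := by nlinarith
  have habs : ‖1 - φ‖ ^ 2 = N := Complex.sq_norm _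
  have hsρ : s * (a ^ 2 + b ^ 2) ≤ 1 := by nlinarith
  have hkey2 : s * N ≤ Ns := by
    rw [hNval, hNsval]
    nlinarith [mul_nonneg (by linarith : (0:ℝ) ≤ 1 - s)
      (by linarith : (0:ℝ) ≤ 1 - s * (a ^ 2 + b ^ 2))]
  set B : ℝ := ∫ x, |Real.sin (u * x)| ∂μ with hB
  have hB0 : 0 ≤ B := integral_nonneg fun x => abs_nonneg _
  have hb : |b| ≤ B := by
    rw [hbb, hφ, charF_im μ u, hB]
    simpa [Real.norm_eq_abs] using
      norm_integral_le_integral_norm (fun x : ℝ => Real.sin (u * x)) (μ := μ)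
  have hzim : (1 - (s:ℂ) * φ).im = -(s * b) := by
    simp [Complex.sub_im, Complex.mul_im, hbb]
  have him : ((1 - (s:ℂ) * φ)⁻¹).im = s * b / Ns := by
    rw [Complex.inv_im, hzim, neg_neg, ← hNs]
  constructor
  · rw [him, habs]
    have heq : |u * (s * b / Ns)| = u * s * |b| / Ns := by
      rw [abs_mul, abs_div, abs_mul, abs_of_pos hu.1, abs_of_pos hs, abs_of_pos hNspos]
      ring
    rw [heq, div_le_div_iff₀ hNspos hNpos]
    have h1 : u * s * |b| * N = (u * |b|) * (s * N) := by ring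
    have h2 : (u * |b|) * (s * N) ≤ (u * |b|) * Ns :=
      mul_le_mul_of_nonneg_left hkey2 (mul_nonneg (le_of_lt hu.1) (abs_nonneg b))
    have h3 : (u * |b|) * Ns ≤ (u * B) * Ns :=
      mul_le_mul_of_nonneg_right
        (mul_le_mul_of_nonneg_left hb (le_of_lt hu.1)) (le_of_lt hNspos)
    linarith
  · have hre : ((1 - φ)⁻¹).re = (1 - a) / N := by
      rw [Complex.inv_re, ← hN]
      simp [Complex.sub_re, haa]
    rw [habs, hre]
    have hMB : u * B ≤ M * (1 - a) :=
      arith_core hc hg hu.1 hB0 (sin_bound μ u) (hkey u hu) hMdef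
    rw [show M * ((1 - a) / N) = (M * (1 - a)) / N from (mul_div_assoc _ _ _).symm]
    gcongr

end Stmt17Aux

/-- For non-arithmetic `X` there are `M ≥ 1`, `δ > 0` such that for `0 < u < 1`,
`0 < s < 1`: `|u Im(1/(1-sφ(u)))| ≤ u E|sin uX|/|1-φ(u)|² ≤ M C(u)`; in particular
integrability of `C` on `(0,1]` forces that of `|u S(u)|`. -/
theorem stmt17 (μ : Measure ℝ) [IsProbabilityMeasure μ]
    (harith : ¬ IsArith μ) :
    ∃ M : ℝ, 1 ≤ M ∧ ∃ δ : ℝ, 0 < δ ∧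
      (∀ u s : ℝ, 0 < u → u < 1 → 0 < s → s < 1 →
        |u * ((1 - s * charF μ u)⁻¹).im|
            ≤ u * (∫ x, |Real.sin (u * x)| ∂μ) / ‖1 - charF μ u‖ ^ 2 ∧
        u * (∫ x, |Real.sin (u * x)| ∂μ) / ‖1 - charF μ u‖ ^ 2
            ≤ M * ((1 - charF μ u)⁻¹).re) ∧
      (IntegrableOn (fun u => ((1 - charF μ u)⁻¹).re) (Set.Ioc (0:ℝ) 1) →
        IntegrableOn (fun u => |u * ((1 - charF μ u)⁻¹).im|) (Set.Ioc (0:ℝ) 1)) := by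
  
  obtain ⟨M, hM1, hchain⟩ := Stmt17Aux.chain μ harith
  refine ⟨M, hM1, 1, one_pos, ?_, ?_⟩
  · intro u s hu hu1 hs hs1
    exact hchain u ⟨hu, le_of_lt hu1⟩ s hs (le_of_lt hs1)
  · intro h
    have hbound : ∀ u ∈ Set.Ioc (0:ℝ) 1,
        |u * ((1 - charF μ u)⁻¹).im| ≤ M * ((1 - charF μ u)⁻¹).re := by
      intro u hu
      have h2 := hchain u hu 1 one_pos le_rfl
      rw [show ((1:ℝ):ℂ) * charF μ u = charF μ u by push_cast; ring] at h2
      exact le_trans h2.1 h2.2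
    have hne : ∀ u ∈ Set.Ioc (0:ℝ) 1, 1 - charF μ u ≠ 0 := by
      intro u hu hz
      have hpos := Stmt17Aux.oneSub_pos μ harith hu.1
      have hre : (1 - charF μ u).re = 0 := by rw [hz]; simp
      rw [Complex.sub_re, Complex.one_re] at hre
      linarith
    have hcont : ContinuousOn (fun u : ℝ => |u * ((1 - charF μ u)⁻¹).im|)
        (Set.Ioc (0:ℝ) 1) := by
      apply ContinuousOn.abs
      apply ContinuousOn.mul continuousOn_id
      apply Complex.continuous_im.comp_continuousOn
      exact ((continuous_const.sub (Stmt17Aux.continuous_charF μ)).continuousOn).inv₀ hne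
    refine Integrable.mono' (h.const_mul M)
      (hcont.aestronglyMeasurable measurableSet_Ioc) ?_
    rw [ae_restrict_iff' measurableSet_Ioc]
    refine Filter.Eventually.of_forall fun u hu => ?_
    rw [Real.norm_eq_abs, abs_abs]
    exact hbound u hu
end
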